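/- Let Δ ⊆ ℂ be the open unit disc, n ≥ 2 an integer, and h : Δ → 𝔹ⁿ a proper holomorphic map that is C² up to a connected nonempty open subset U of ∂Δ. Then the set {P ∈ U : Σ_{j=1}^n h_j'(P) · conj(h_j(P)) = 0} is nowhere dense in ∂Δ, where h_j' denotes the complex derivative of the j-th component (extended continuously to U by the C² extension). -/

import Mathlib

/-!
The set is in fact empty. Let `P ∈ U`. Properness forces the boundary value `a = H(P)` to be a unit vector, so
`f = ⟨a, h⟩` is a holomorphic self-map of the disc with `f(tP) → 1` and
`f'(tP) → ⟨a, h'(P)⟩` as `t → 1⁻`. By Schwarz–Pick, `1 - |f(tP)| ≳ 1 - t`; if the derivative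
tended to `0`, the mean value inequality would give `|1 - f(tP)| = o(1 - t)`, which is
incompatible (a Hopf lemma). Hence `⟨a, h'(P)⟩ ≠ 0`.
-/

open Metric Filter Topology ComplexConjugate Set

namespace Complex

lemma sq_norm_one_sub_conj_mul_sub_sq_norm_sub (c w : ℂ) :
    ‖1 - conj c * w‖ ^ 2 - ‖w - c‖ ^ 2 = (1 - ‖c‖ ^ 2) * (1 - ‖w‖ ^ 2) := by
  simp only [Complex.sq_norm, normSq_apply, sub_re, sub_im, mul_re, mul_im, one_re, one_im, conj_re,
    conj_im]
  ring

lemma norm_sub_lt_norm_one_sub_conj_mul {c w : ℂ} (hc : ‖c‖ < 1) (hw : ‖w‖ < 1) :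
    ‖w - c‖ < ‖1 - conj c * w‖ := by
  have hid := sq_norm_one_sub_conj_mul_sub_sq_norm_sub c w
  have hpos : 0 < (1 - ‖c‖ ^ 2) * (1 - ‖w‖ ^ 2) := by
    apply mul_pos <;> nlinarith [norm_nonneg c, norm_nonneg w]
  exact lt_of_pow_lt_pow_left₀ 2 (norm_nonneg _) (by linarith)

lemma one_sub_norm_sq_le_of_mapsTo_ball {f : ℂ → ℂ} (hd : DifferentiableOn ℂ f (ball 0 1))
    (hmaps : MapsTo f (ball 0 1) (ball 0 1)) {z : ℂ} (hz : ‖z‖ < 1) :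
    (1 - ‖f 0‖) / (1 + ‖f 0‖) * (1 - ‖z‖ ^ 2) ≤ 1 - ‖f z‖ ^ 2 := by
  set c := f 0
  have hnorm : ∀ z ∈ ball (0 : ℂ) 1, ‖f z‖ < 1 := fun z hz => mem_ball_zero_iff.1 (hmaps hz)
  have hc : ‖c‖ < 1 := hnorm 0 (mem_ball_self one_pos)
  have hden : ∀ z ∈ ball (0 : ℂ) 1, 0 < ‖1 - conj c * f z‖ := fun z hz =>
    (norm_nonneg _).trans_lt (norm_sub_lt_norm_one_sub_conj_mul hc (hnorm z hz))
  -- compose with the disc automorphism sending `c` to `0` and apply the Schwarz lemma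
  set g : ℂ → ℂ := fun z => (f z - c) / (1 - conj c * f z)
  have hgd : DifferentiableOn ℂ g (ball 0 1) :=
    (hd.sub_const c).div ((differentiableOn_const 1).sub (hd.const_mul _))
      fun z hz => norm_pos_iff.1 (hden z hz)
  have hgmaps : MapsTo g (ball 0 1) (closedBall 0 1) := fun z hz => by
    rw [mem_closedBall_zero_iff, norm_div, div_le_one (hden z hz)]
    exact (norm_sub_lt_norm_one_sub_conj_mul hc (hnorm z hz)).le
  have hg : ‖g z‖ ≤ ‖z‖ := norm_le_norm_of_mapsTo_ball hgd hgmaps (by simp [g, c]) hz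
  have hzball : z ∈ ball (0 : ℂ) 1 := mem_ball_zero_iff.2 hz
  have hD := hden z hzball
  have hfz := hnorm z hzball
  have hwc : ‖f z - c‖ = ‖g z‖ * ‖1 - conj c * f z‖ := by
    rw [norm_div, div_mul_cancel₀ _ hD.ne']
  have hid := sq_norm_one_sub_conj_mul_sub_sq_norm_sub c (f z)
  have hDlow : 1 - ‖c‖ ≤ ‖1 - conj c * f z‖ := by
    have := norm_sub_norm_le 1 (conj c * f z)
    rw [norm_one, norm_mul, norm_conj] at this
    nlinarith [norm_nonneg c, norm_nonneg (f z)]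
  have hiso : ‖1 - conj c * f z‖ ^ 2 * (1 - ‖g z‖ ^ 2) = (1 - ‖c‖ ^ 2) * (1 - ‖f z‖ ^ 2) := by
    linear_combination hid + (‖f z - c‖ + ‖g z‖ * ‖1 - conj c * f z‖) * hwc
  have hmono : (1 - ‖c‖) ^ 2 * (1 - ‖z‖ ^ 2) ≤ ‖1 - conj c * f z‖ ^ 2 * (1 - ‖g z‖ ^ 2) :=
    mul_le_mul (pow_le_pow_left₀ (by linarith) hDlow 2)
      (by nlinarith [norm_nonneg (g z)]) (by nlinarith [norm_nonneg z]) (sq_nonneg _)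
  rw [div_mul_eq_mul_div, div_le_iff₀ (by positivity)]
  nlinarith [norm_nonneg c]

lemma tendsto_ofReal_mul_nhdsLT_one {P : ℂ} (hP : ‖P‖ = 1) :
    Tendsto (fun t : ℝ => (t : ℂ) * P) (𝓝[<] 1) (𝓝[ball 0 1] P) := by
  refine tendsto_nhdsWithin_iff.2 ⟨?_, ?_⟩
  · exact tendsto_nhdsWithin_of_tendsto_nhds
      ((continuous_ofReal.mul continuous_const).tendsto' 1 P (by simp))
  · filter_upwards [Ioo_mem_nhdsLT zero_lt_one] with t ht
    rw [mem_ball_zero_iff, norm_mul, hP, mul_one, norm_real, Real.norm_of_nonneg ht.1.le]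
    exact ht.2

theorem not_tendsto_deriv_zero_of_tendsto_of_mapsTo_ball {f f' : ℂ → ℂ}
    (hf : ∀ z ∈ ball (0 : ℂ) 1, HasDerivAt f (f' z) z) (hmaps : MapsTo f (ball 0 1) (ball 0 1))
    {P q : ℂ} (hP : ‖P‖ = 1) (hq : ‖q‖ = 1)
    (hfq : Tendsto (fun t : ℝ => f (t * P)) (𝓝[<] 1) (𝓝 q)) :
    ¬ Tendsto (fun t : ℝ => f' (t * P)) (𝓝[<] 1) (𝓝 0) := by
  intro hf'
  set κ := (1 - ‖f 0‖) / (1 + ‖f 0‖)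
  have hκ : 0 < κ := by
    have := mem_ball_zero_iff.1 (hmaps (mem_ball_self one_pos))
    exact div_pos (by linarith) (by positivity)
  have hmem : ∀ s ∈ Ico (0 : ℝ) 1, (s : ℂ) * P ∈ ball (0 : ℂ) 1 := fun s hs => by
    rw [mem_ball_zero_iff, norm_mul, hP, mul_one, norm_real, Real.norm_of_nonneg hs.1]
    exact hs.2
  obtain ⟨t₀, ht₀ : t₀ < 1, hsmall⟩ := mem_nhdsLT_iff_exists_Ioo_subset.1
    (hf'.eventually (closedBall_mem_nhds 0 (by positivity : 0 < κ / 4)))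
  obtain ⟨t, ht, ht1⟩ := exists_between (max_lt ht₀ zero_lt_one)
  have ht0 : 0 ≤ t := (le_max_right t₀ 0).trans ht.le
  have hIco : Ico t 1 ⊆ Ioo t₀ 1 ∩ Ico 0 1 := fun s hs =>
    ⟨⟨(le_max_left _ _).trans_lt (ht.trans_le hs.1), hs.2⟩, ⟨ht0.trans hs.1, hs.2⟩⟩
  have htP : (t : ℂ) * P ∈ ball (0 : ℂ) 1 := hmem t ⟨ht0, ht1⟩
  have hlip : ∀ u ∈ Ico t 1, ‖f (u * P) - f (t * P)‖ ≤ κ / 4 * (u - t) := by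
    intro u hu
    have hderiv : ∀ s ∈ Ico t 1, HasDerivWithinAt (fun s : ℝ => f (s * P)) (f' (s * P) * P)
        (Ico t 1) s := fun s hs =>
      ((hf _ (hmem s (hIco hs).2)).comp (s : ℂ) (hasDerivAt_mul_const P)).comp_ofReal.hasDerivWithinAt
    have hbound : ∀ s ∈ Ico t 1, ‖f' (s * P) * P‖ ≤ κ / 4 := fun s hs => by
      simpa [hP] using hsmall (hIco hs).1
    have := (convex_Ico t 1).norm_image_sub_le_of_norm_hasDerivWithin_le hderiv hbound
      (left_mem_Ico.2 ht1) hu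
    rwa [Real.norm_of_nonneg (by linarith [hu.1])] at this
  have hclose : ‖q - f (t * P)‖ ≤ κ / 4 * (1 - t) := by
    refine le_of_tendsto_of_tendsto ((hfq.sub_const _).norm)
      (tendsto_nhdsWithin_of_tendsto_nhds ((continuous_const.mul
        (continuous_id.sub continuous_const)).tendsto 1)) ?_
    filter_upwards [Ioo_mem_nhdsLT ht1] with u hu using hlip u ⟨hu.1.le, hu.2⟩
  have hfar : κ * (1 - t ^ 2) ≤ 1 - ‖f (t * P)‖ ^ 2 := by
    have := one_sub_norm_sq_le_of_mapsTo_ball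
      (fun z hz => (hf z hz).differentiableAt.differentiableWithinAt) hmaps (mem_ball_zero_iff.1 htP)
    rwa [norm_mul, hP, mul_one, norm_real, Real.norm_of_nonneg ht0] at this
  have hcirc : 1 - ‖f (t * P)‖ ≤ ‖q - f (t * P)‖ := by
    simpa [hq] using norm_sub_norm_le q (f (t * P))
  have hft : ‖f (t * P)‖ < 1 := mem_ball_zero_iff.1 (hmaps htP)
  have : κ * (1 - t) ≤ κ * (1 - t ^ 2) := by nlinarith
  nlinarith [mul_pos hκ (sub_pos.2 ht1), norm_nonneg (f (t * P))]

end Complex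

theorem norm_eq_one_of_tendsto_of_proper {X E α : Type*} [TopologicalSpace X] [T2Space X]
    [NormedAddCommGroup E] [ProperSpace E] {Ω : Set X} {h : X → E}
    (hmaps : MapsTo h Ω (ball 0 1))
    (hproper : ∀ K : Set E, K ⊆ ball 0 1 → IsCompact K → IsCompact {z ∈ Ω | h z ∈ K})
    {P : X} (hP : P ∉ Ω) {l : Filter α} [l.NeBot] {z : α → X} (hz : Tendsto z l (𝓝[Ω] P))
    {a : E} (ha : Tendsto (fun t => h (z t)) l (𝓝 a)) : ‖a‖ = 1 := by
  have hzΩ : ∀ᶠ t in l, z t ∈ Ω := (tendsto_nhdsWithin_iff.1 hz).2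
  refine le_antisymm ?_ (not_lt.1 fun ha1 => hP ?_)
  · exact mem_closedBall_zero_iff.1 (isClosed_closedBall.mem_of_tendsto ha
      (hzΩ.mono fun t ht => ball_subset_closedBall (hmaps ht)))
  · obtain ⟨r, har, hr⟩ := exists_between ha1
    have hK : IsCompact {w ∈ Ω | h w ∈ closedBall 0 r} :=
      hproper _ (closedBall_subset_ball hr) (isCompact_closedBall 0 r)
    refine (hK.isClosed.mem_of_tendsto (tendsto_nhds_of_tendsto_nhdsWithin hz) ?_).1
    filter_upwards [hzΩ, ha.eventually (closedBall_mem_nhds_of_mem (mem_ball_zero_iff.2 har))]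
      with t ht hat using ⟨ht, hat⟩

theorem inner_ne_zero_of_tendsto_of_proper {E : Type*} [NormedAddCommGroup E]
    [InnerProductSpace ℂ E] [ProperSpace E] {h h' : ℂ → E}
    (hh' : ∀ z ∈ ball (0 : ℂ) 1, HasDerivAt h (h' z) z) (hmaps : MapsTo h (ball 0 1) (ball 0 1))
    (hproper : ∀ K : Set E, K ⊆ ball 0 1 → IsCompact K → IsCompact {z ∈ ball (0 : ℂ) 1 | h z ∈ K})
    {P : ℂ} (hP : ‖P‖ = 1) {a b : E} (ha : Tendsto h (𝓝[ball 0 1] P) (𝓝 a))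
    (hb : Tendsto h' (𝓝[ball 0 1] P) (𝓝 b)) : inner ℂ a b ≠ 0 := by
  intro hab
  have hray := Complex.tendsto_ofReal_mul_nhdsLT_one hP
  have hPΩ : P ∉ ball (0 : ℂ) 1 := by simp [hP]
  have hanorm : ‖a‖ = 1 := norm_eq_one_of_tendsto_of_proper hmaps hproper hPΩ hray (ha.comp hray)
  refine Complex.not_tendsto_deriv_zero_of_tendsto_of_mapsTo_ball (f := fun z => inner ℂ a (h z))
    (f' := fun z => inner ℂ a (h' z))
    (fun z hz => (innerSL ℂ a).hasFDerivAt.comp_hasDerivAt z (hh' z hz)) ?_ hP (q := inner ℂ a a)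
    (by simp [hanorm]) (((tendsto_const_nhds (x := a)).inner (𝕜 := ℂ) ha).comp hray) ?_
  · intro z hz
    rw [mem_ball_zero_iff]
    calc ‖inner ℂ a (h z)‖ ≤ ‖a‖ * ‖h z‖ := norm_inner_le_norm a (h z)
      _ < 1 := by rw [hanorm, one_mul]; exact mem_ball_zero_iff.1 (hmaps hz)
  · exact hab ▸ ((tendsto_const_nhds (x := a)).inner (𝕜 := ℂ) hb).comp hray

theorem stmt3_general (n : ℕ)
    (h : ℂ → EuclideanSpace ℂ (Fin n))
    (hmaps : Set.MapsTo h (Metric.ball (0 : ℂ) 1) (Metric.ball (0 : EuclideanSpace ℂ (Fin n)) 1))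
    (hproper : ∀ K : Set (EuclideanSpace ℂ (Fin n)),
      K ⊆ Metric.ball (0 : EuclideanSpace ℂ (Fin n)) 1 → IsCompact K →
      IsCompact {z ∈ Metric.ball (0 : ℂ) 1 | h z ∈ K})
    -- `U` is a connected nonempty open subset of the circle `∂Δ`
    (V : Set ℂ)
    (U : Set ℂ) (hUdef : U = V ∩ Metric.sphere (0 : ℂ) 1)
    -- `h` is `C²` up to `U`: a `C²` extension `H` on `closure(Δ) ∩ W`, `W` open containing `U`
    (W : Set ℂ) (hW : IsOpen W) (hUW : U ⊆ W)
    (H : ℂ → EuclideanSpace ℂ (Fin n))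
    (hHh : Set.EqOn H h (Metric.ball (0 : ℂ) 1 ∩ W))
    (hH : ContDiffOn ℝ 2 H (closure (Metric.ball (0 : ℂ) 1) ∩ W))
    -- `h'` is the complex derivative of `h`, extended continuously by the `C²` extension
    (h' : ℂ → EuclideanSpace ℂ (Fin n))
    (hh' : ∀ z ∈ Metric.ball (0 : ℂ) 1, HasDerivAt h (h' z) z)
    (hh'cont : ContinuousOn h' (closure (Metric.ball (0 : ℂ) 1) ∩ W)) :
    IsNowhereDense ((fun P : Metric.sphere (0 : ℂ) 1 => (P : ℂ)) ⁻¹'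
      {P : ℂ | P ∈ U ∧ ∑ j : Fin n, h' P j * (starRingEnd ℂ) (H P j) = 0}) := by
  suffices hempty : {P : ℂ | P ∈ U ∧ ∑ j : Fin n, h' P j * (starRingEnd ℂ) (H P j) = 0} = ∅ by
    simp [hempty]
  refine eq_empty_of_forall_notMem fun P ⟨hPU, hsum⟩ => ?_
  have hP : ‖P‖ = 1 := mem_sphere_zero_iff_norm.1 (hUdef ▸ hPU).2
  have hPcl : P ∈ closure (ball (0 : ℂ) 1) ∩ W := by
    rw [closure_ball 0 one_ne_zero]
    exact ⟨mem_closedBall_zero_iff.2 hP.le, hUW hPU⟩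
  have hnhds : 𝓝[ball 0 1] P = 𝓝[ball 0 1 ∩ W] P :=
    (nhdsWithin_inter_of_mem' (mem_nhdsWithin_of_mem_nhds (hW.mem_nhds (hUW hPU)))).symm
  have hsub : ball (0 : ℂ) 1 ∩ W ⊆ closure (ball 0 1) ∩ W := inter_subset_inter_left _ subset_closure
  have hHP : Tendsto h (𝓝[ball 0 1] P) (𝓝 (H P)) := by
    rw [hnhds]
    exact (((hH.continuousOn P hPcl).mono hsub).tendsto).congr' (eventuallyEq_nhdsWithin_of_eqOn hHh)
  have hh'P : Tendsto h' (𝓝[ball 0 1] P) (𝓝 (h' P)) := by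
    rw [hnhds]
    exact ((hh'cont P hPcl).mono hsub).tendsto
  refine inner_ne_zero_of_tendsto_of_proper hh' hmaps hproper hP hHP hh'P ?_
  simpa [PiLp.inner_apply, mul_comm] using hsum

/-- Lemma 5.2. For a proper holomorphic map `h : Δ → 𝔹ⁿ` (`n ≥ 2`) that is
`C²` up to a connected nonempty open subset `U` of `∂Δ`, the set of points `P ∈ U` where the
image of the outward normal is complex-tangential to the sphere, i.e.
`∑ⱼ hⱼ'(P)·conj(hⱼ(P)) = 0`, is nowhere dense in `∂Δ`. -/
theorem stmt3 (n : ℕ) (hn : 2 ≤ n)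
    (h : ℂ → EuclideanSpace ℂ (Fin n))
    (hholo : DifferentiableOn ℂ h (Metric.ball (0 : ℂ) 1))
    (hmaps : Set.MapsTo h (Metric.ball (0 : ℂ) 1) (Metric.ball (0 : EuclideanSpace ℂ (Fin n)) 1))
    (hproper : ∀ K : Set (EuclideanSpace ℂ (Fin n)),
      K ⊆ Metric.ball (0 : EuclideanSpace ℂ (Fin n)) 1 → IsCompact K →
      IsCompact {z ∈ Metric.ball (0 : ℂ) 1 | h z ∈ K})
    -- `U` is a connected nonempty open subset of the circle `∂Δ`
    (V : Set ℂ) (hV : IsOpen V)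
    (U : Set ℂ) (hUdef : U = V ∩ Metric.sphere (0 : ℂ) 1) (hUconn : IsConnected U)
    -- `h` is `C²` up to `U`: a `C²` extension `H` on `closure(Δ) ∩ W`, `W` open containing `U`
    (W : Set ℂ) (hW : IsOpen W) (hUW : U ⊆ W)
    (H : ℂ → EuclideanSpace ℂ (Fin n))
    (hHh : Set.EqOn H h (Metric.ball (0 : ℂ) 1 ∩ W))
    (hH : ContDiffOn ℝ 2 H (closure (Metric.ball (0 : ℂ) 1) ∩ W))
    -- `h'` is the complex derivative of `h`, extended continuously by the `C²` extension
    (h' : ℂ → EuclideanSpace ℂ (Fin n))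
    (hh' : ∀ z ∈ Metric.ball (0 : ℂ) 1, HasDerivAt h (h' z) z)
    (hh'cont : ContinuousOn h' (closure (Metric.ball (0 : ℂ) 1) ∩ W)) :
    IsNowhereDense ((fun P : Metric.sphere (0 : ℂ) 1 => (P : ℂ)) ⁻¹'
      {P : ℂ | P ∈ U ∧ ∑ j : Fin n, h' P j * (starRingEnd ℂ) (H P j) = 0}) :=
  stmt3_general n h hmaps hproper V U hUdef W hW hUW H hHh hH h' hh' hh'cont
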